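/- Let p, q be primes with p ≡ 1 (mod q) and G = ⟨s, t | t^p = s^q = 1, s⁻¹ t s = t^k⟩ where k has order q mod p, and T = ⟨t⟩. Then for every g ∉ T, the conjugacy class of g in G is the coset gT. -/

import Mathlib

/-!
Every element of `G` has the form `s ^ j * t ^ i`. Recording `j mod q` is a homomorphism onto
an abelian group with kernel `T`, so every conjugate of `g` lies in `gT`. Conversely, if
`g = s ^ j * t ^ i ∉ T` then `q ∤ j`, so `g⁻¹ t g = t ^ n` with `n = k ^ j ≢ 1 (mod p)`, and
`t ^ a * g * t ^ (-a) = g * t ^ (a * (n - 1))` runs through all of `gT` as `a` runs mod `p`.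
-/

open scoped Pointwise

/-- Relations for the presentation `⟨s, t | t^p = s^q = 1, s⁻¹ t s = t^k⟩`,
with `s = of 0` and `t = of 1`. -/
def pqRels (p q k : ℕ) : Set (FreeGroup (Fin 2)) :=
  {FreeGroup.of 1 ^ p, FreeGroup.of 0 ^ q,
    (FreeGroup.of 0)⁻¹ * FreeGroup.of 1 * FreeGroup.of 0 * (FreeGroup.of 1 ^ k)⁻¹}

section Group

variable {G : Type*} [Group G] {s t : G}

lemma zpow_eq_zpow_of_intCast_eq {p : ℕ} (ht : t ^ p = 1) {a b : ℤ}
    (h : (a : ZMod p) = b) : t ^ a = t ^ b :=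
  zpow_eq_zpow_iff_modEq.mpr <| ((ZMod.intCast_eq_intCast_iff _ _ _).mp h).of_dvd <|
    Int.natCast_dvd_natCast.mpr (orderOf_dvd_of_pow_eq_one ht)

lemma zpow_mul_eq_mul_zpow {n : ℤ} (h : t * s = s * t ^ n) (a : ℤ) :
    t ^ a * s = s * t ^ (a * n) := by
  rw [mul_comm a, zpow_mul]
  exact (SemiconjBy.zpow_right h.symm a).symm

lemma zpow_mul_pow_eq_pow_mul_zpow {n : ℤ} (h : t * s = s * t ^ n) (a : ℤ) (j : ℕ) :
    t ^ a * s ^ j = s ^ j * t ^ (a * n ^ j) := by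
  induction j generalizing a with
  | zero => simp
  | succ j ih =>
    rw [pow_succ', ← mul_assoc, zpow_mul_eq_mul_zpow h, mul_assoc, ih, ← mul_assoc, pow_succ',
      mul_assoc a]

lemma exists_eq_pow_mul_zpow {q : ℕ} {n : ℤ} (hq : 0 < q) (hs : s ^ q = 1)
    (h : t * s = s * t ^ n) (hgen : Subgroup.closure {s, t} = ⊤) (g : G) :
    ∃ (j : ℕ) (i : ℤ), g = s ^ j * t ^ i := by
  have mul_s_pow (j m : ℕ) (i : ℤ) : ∃ (j' : ℕ) (i' : ℤ), s ^ j * t ^ i * s ^ m = s ^ j' * t ^ i' :=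
    ⟨j + m, i * n ^ m, by rw [mul_assoc, zpow_mul_pow_eq_pow_mul_zpow h, ← mul_assoc, pow_add]⟩
  have inv_eq : s⁻¹ = s ^ (q - 1) :=
    (eq_inv_of_mul_eq_one_left (by rw [← pow_succ, Nat.sub_add_cancel hq, hs])).symm
  induction hgen ▸ Subgroup.mem_top g using Subgroup.closure_induction_right with
  | one => exact ⟨0, 0, by simp⟩
  | mul_right x _ y hy ih =>
    obtain ⟨j, i, rfl⟩ := ih
    rcases hy with rfl | rfl
    · simpa using mul_s_pow j 1 i
    · exact ⟨j, i + 1, by rw [mul_assoc, zpow_add_one]⟩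
  | mul_inv_cancel x _ y hy ih =>
    obtain ⟨j, i, rfl⟩ := ih
    rcases hy with rfl | rfl
    · rw [inv_eq]
      exact mul_s_pow j (q - 1) i
    · exact ⟨j, i - 1, by rw [mul_assoc, zpow_sub_one]⟩

lemma isConj_mul_zpow {p : ℕ} [Fact p.Prime] {g : G} {n : ℤ} (ht : t ^ p = 1)
    (hg : t * g = g * t ^ n) (hn : (n : ZMod p) ≠ 1) (b : ℤ) : IsConj g (g * t ^ b) := by
  obtain ⟨a, ha⟩ := ZMod.intCast_surjective ((b : ZMod p) / ((n : ZMod p) - 1))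
  refine isConj_iff.mpr ⟨t ^ a, ?_⟩
  calc t ^ a * g * (t ^ a)⁻¹ = g * t ^ (a * n) * t ^ (-a) := by
        rw [zpow_mul_eq_mul_zpow hg, zpow_neg]
    _ = g * t ^ (a * (n - 1)) := by rw [mul_assoc, ← zpow_add, mul_sub, mul_one, sub_eq_add_neg]
    _ = g * t ^ b := by
        rw [zpow_eq_zpow_of_intCast_eq ht]
        push_cast
        rw [ha, div_mul_cancel₀ _ (sub_ne_zero.mpr hn)]

end Group

section Presentation

variable {p q k : ℕ}

open PresentedGroup

lemma pq_s_pow : (of 0 : PresentedGroup (pqRels p q k)) ^ q = 1 :=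
  (map_pow _ _ _).symm.trans (one_of_mem (by simp [pqRels]))

lemma pq_t_pow : (of 1 : PresentedGroup (pqRels p q k)) ^ p = 1 :=
  (map_pow _ _ _).symm.trans (one_of_mem (by simp [pqRels]))

lemma pq_t_mul_s :
    (of 1 : PresentedGroup (pqRels p q k)) * of 0 = of 0 * of 1 ^ (k : ℤ) := by
  have := one_of_mem (rels := pqRels p q k)
    (x := (FreeGroup.of 0)⁻¹ * FreeGroup.of 1 * FreeGroup.of 0 * (FreeGroup.of 1 ^ k)⁻¹)
    (by simp [pqRels])
  rw [map_mul, map_inv, map_pow, mul_inv_eq_one, map_mul, map_mul, map_inv, mul_assoc,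
    inv_mul_eq_iff_eq_mul] at this
  rw [zpow_natCast]
  exact this

lemma pq_closure_eq_top :
    Subgroup.closure {of 0, of 1} = (⊤ : Subgroup (PresentedGroup (pqRels p q k))) :=
  eq_top_iff.mpr fun g _ =>
    generated_by _ _ (fun j => by fin_cases j <;> exact Subgroup.subset_closure (by simp)) g

lemma pq_exists_eq_pow_mul_zpow (hq : 0 < q) (g : PresentedGroup (pqRels p q k)) :
    ∃ (j : ℕ) (i : ℤ), g = of 0 ^ j * of 1 ^ i :=
  exists_eq_pow_mul_zpow hq pq_s_pow pq_t_mul_s pq_closure_eq_top g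

/-- The projection `G → G ⧸ T ≅ ZMod q`. -/
def pqIndex (p q k : ℕ) : PresentedGroup (pqRels p q k) →* Multiplicative (ZMod q) :=
  toGroup (f := ![Multiplicative.ofAdd 1, 1]) <| by
    rintro r (rfl | rfl | rfl) <;> simp [← ofAdd_nsmul]

lemma pqIndex_pow_mul_zpow (j : ℕ) (i : ℤ) :
    pqIndex p q k (of 0 ^ j * of 1 ^ i) = Multiplicative.ofAdd (j : ZMod q) := by
  simp [pqIndex, toGroup.of, ← ofAdd_nsmul]

lemma mem_zpowers_of_pqIndex_eq_one (hq : 0 < q) {x : PresentedGroup (pqRels p q k)}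
    (hx : pqIndex p q k x = 1) : x ∈ Subgroup.zpowers (of 1) := by
  obtain ⟨j, i, rfl⟩ := pq_exists_eq_pow_mul_zpow hq x
  rw [pqIndex_pow_mul_zpow, ofAdd_eq_one, ZMod.natCast_eq_zero_iff] at hx
  obtain ⟨c, rfl⟩ := hx
  rw [pow_mul, pq_s_pow, one_pow, one_mul]
  exact Subgroup.zpow_mem_zpowers _ i

lemma pq_inv_mul_mem_zpowers_of_isConj (hq : 0 < q) {g y : PresentedGroup (pqRels p q k)}
    (h : IsConj g y) : g⁻¹ * y ∈ Subgroup.zpowers (of 1) :=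
  mem_zpowers_of_pqIndex_eq_one hq <| by
    rw [map_mul, map_inv, isConj_iff_eq.mp ((pqIndex p q k).map_isConj h), inv_mul_cancel]

lemma pq_isConj_mul_zpow (hp : p.Prime) (hq : 0 < q) (hk : orderOf (k : ZMod p) = q)
    {g : PresentedGroup (pqRels p q k)} (hg : g ∉ Subgroup.zpowers (of 1)) (b : ℤ) :
    IsConj g (g * of 1 ^ b) := by
  have := Fact.mk hp
  obtain ⟨j, i, rfl⟩ := pq_exists_eq_pow_mul_zpow hq g
  refine isConj_mul_zpow (n := k ^ j) pq_t_pow ?_ ?_ b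
  · have := zpow_mul_pow_eq_pow_mul_zpow (pq_t_mul_s (p := p) (q := q) (k := k)) 1 j
    rw [zpow_one, one_mul] at this
    rw [← mul_assoc, this, mul_assoc, mul_assoc, ← zpow_add, ← zpow_add, add_comm]
  · push_cast
    refine fun hkj => hg (mem_zpowers_of_pqIndex_eq_one hq ?_)
    rw [pqIndex_pow_mul_zpow, ofAdd_eq_one, ZMod.natCast_eq_zero_iff, ← hk]
    exact orderOf_dvd_of_pow_eq_one hkj

end Presentation

theorem conjClass_eq_coset_general {p q k : ℕ} (hp : p.Prime) (hq : q.Prime)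
    (hk : orderOf (k : ZMod p) = q) :
    letI G := PresentedGroup (pqRels p q k)
    letI t : G := PresentedGroup.of 1
    ∀ g : G, g ∉ Subgroup.zpowers t →
      {y | IsConj g y} = g • ((Subgroup.zpowers t : Subgroup G) : Set G) := by
  intro g hg
  ext y
  rw [Set.mem_ofPred_eq, mem_leftCoset_iff]
  refine ⟨pq_inv_mul_mem_zpowers_of_isConj hq.pos, fun hy => ?_⟩
  obtain ⟨b, hb⟩ := Subgroup.mem_zpowers_iff.mp hy
  rw [← mul_inv_cancel_left g y, ← hb]
  exact pq_isConj_mul_zpow hp hq.pos hk hg b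

/-- For primes `p ≡ 1 (mod q)` and `k` of order `q` mod `p`, in
`G = C_p ⋊ C_q = ⟨s, t | t^p = s^q = 1, s⁻¹ t s = t^k⟩` with `T = ⟨t⟩`, the
conjugacy class of any `g ∉ T` is the coset `gT`. -/
theorem conjClass_eq_coset {p q k : ℕ} (hp : p.Prime) (hq : q.Prime)
    (hpq : p % q = 1) (hk : orderOf (k : ZMod p) = q) :
    letI G := PresentedGroup (pqRels p q k)
    letI t : G := PresentedGroup.of 1
    ∀ g : G, g ∉ Subgroup.zpowers t →
      {y | IsConj g y} = g • ((Subgroup.zpowers t : Subgroup G) : Set G) :=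
  conjClass_eq_coset_general hp hq hk
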